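/- arXiv:1912.11491 — 6 statements merged into one kernel-verified Lean document; each statement's English description precedes it below -/
import Mathlib

section
/- Let G be a connected unweighted graph of diameter at most D, and let s_1, ..., s_ℓ be a path of vertices (consecutive ones adjacent). If the family F = { {(i,Δ) : d(v,s_i) ≤ d(v,s_{i+1}) + Δ} : v ∈ V } ⊆ 2^([ℓ-1]×{-1,0}) has cardinality at most N, then the number of distinct distance tuples (d(v,s_1), ..., d(v,s_ℓ)) over v ∈ V is at most (D+1)·N. -/
open Classical in
noncomputable def recon (ℓ : ℕ) (S : Set (Fin ℓ × ℤ)) (d0 : ℕ) : ℕ → ℕ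
  | 0 => d0
  | j + 1 =>
    if h : j < ℓ then
      (if (⟨j, h⟩, (-1 : ℤ)) ∈ S then recon ℓ S d0 j + 1
       else if (⟨j, h⟩, (0 : ℤ)) ∈ S then recon ℓ S d0 j
       else recon ℓ S d0 j - 1)
    else 0

/-- If the family of sets `F(v) = {(i,Δ) : d(v,s_i) ≤ d(v,s_{i+1}) + Δ}`
has at most `N` members, then the number of distinct distance tuples is at most `(D+1)·N`. -/
theorem stmt_1 {V : Type*} [Fintype V] (G : SimpleGraph V) (hG : G.Connected)
    (D N ℓ : ℕ) (hD : ∀ u v : V, G.dist u v ≤ D)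
    (s : Fin (ℓ + 1) → V)
    (hadj : ∀ i : Fin ℓ, G.Adj (s i.castSucc) (s i.succ))
    (hF : (Set.range (fun v : V =>
        {p : Fin ℓ × ℤ | (p.2 = -1 ∨ p.2 = 0) ∧
          (G.dist v (s p.1.castSucc) : ℤ) ≤ (G.dist v (s p.1.succ) : ℤ) + p.2})).ncard ≤ N) :
    (Set.range (fun v : V => (fun i => G.dist v (s i)))).ncard ≤ (D + 1) * N := by
  classical
  set Ff : V → Set (Fin ℓ × ℤ) := fun v =>
      {p : Fin ℓ × ℤ | (p.2 = -1 ∨ p.2 = 0) ∧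
        (G.dist v (s p.1.castSucc) : ℤ) ≤ (G.dist v (s p.1.succ) : ℤ) + p.2} with hFf
  -- key reconstruction lemma
  have key : ∀ (v : V) (j : ℕ) (h : j ≤ ℓ),
      recon ℓ (Ff v) (G.dist v (s 0)) j = G.dist v (s ⟨j, by omega⟩) := by
    intro v j
    induction j with
    | zero => intro h; simp [recon]
    | succ j ih =>
      intro h
      have hj : j < ℓ := by omega
      have ihj := ih (by omega)
      set i : Fin ℓ := ⟨j, hj⟩ with hi
      have hcs : i.castSucc = ⟨j, by omega⟩ := rfl
      have hsc : i.succ = (⟨j + 1, by omega⟩ : Fin (ℓ + 1)) := rfl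
      set a := G.dist v (s i.castSucc) with ha
      set b := G.dist v (s i.succ) with hb
      have hd1 : G.dist (s i.castSucc) (s i.succ) = 1 :=
        (SimpleGraph.dist_eq_one_iff_adj).mpr (hadj i)
      have hd1' : G.dist (s i.succ) (s i.castSucc) = 1 := by
        rw [SimpleGraph.dist_comm]; exact hd1
      have hba : b ≤ a + 1 := by
        have := hG.dist_triangle (u := v) (v := s i.castSucc) (w := s i.succ)
        omega
      have hab : a ≤ b + 1 := by
        have := hG.dist_triangle (u := v) (v := s i.succ) (w := s i.castSucc)
        omega
      have hm1 : ((i, (-1 : ℤ)) ∈ Ff v) ↔ b = a + 1 := by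
        simp only [hFf, Set.mem_setOf_eq]
        constructor
        · rintro ⟨-, h2⟩; rw [← ha, ← hb] at h2; omega
        · intro hba'; refine ⟨by tauto, ?_⟩; rw [← ha, ← hb]; omega
      have hm0 : ((i, (0 : ℤ)) ∈ Ff v) ↔ a ≤ b := by
        simp only [hFf, Set.mem_setOf_eq]
        constructor
        · rintro ⟨-, h2⟩; rw [← ha, ← hb] at h2; omega
        · intro hba'; refine ⟨by tauto, ?_⟩; rw [← ha, ← hb]; omega
      show recon ℓ (Ff v) (G.dist v (s 0)) (j + 1) = b
      rw [recon]
      rw [dif_pos hj]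
      have ihj' : recon ℓ (Ff v) (G.dist v (s 0)) j = a := by
        rw [ihj, ha, hcs]
      rw [ihj']
      by_cases h1 : (i, (-1 : ℤ)) ∈ Ff v
      · rw [if_pos h1]; exact (hm1.mp h1).symm
      · rw [if_neg h1]
        have hb1 : b ≠ a + 1 := fun hc => h1 (hm1.mpr hc)
        by_cases h0 : (i, (0 : ℤ)) ∈ Ff v
        · rw [if_pos h0]; have := hm0.mp h0; omega
        · rw [if_neg h0]
          have : ¬ a ≤ b := fun hc => h0 (hm0.mpr hc)
          omega
  -- set up finsets
  have hfin : (Set.range Ff).Finite := Set.finite_range Ff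
  set T : Finset (Set (Fin ℓ × ℤ)) := hfin.toFinset with hT
  have hTcard : T.card ≤ N := by
    rwa [hT, ← Set.ncard_coe_finset, Set.Finite.coe_toFinset]
  set P : Finset (ℕ × Set (Fin ℓ × ℤ)) := (Finset.Iic D) ×ˢ T with hP
  set g : ℕ × Set (Fin ℓ × ℤ) → (Fin (ℓ + 1) → ℕ) := fun p i => recon ℓ p.2 p.1 i.val with hg
  have hsub : (Set.range (fun v : V => (fun i => G.dist v (s i)))) ⊆ g '' ↑P := by
    rintro _ ⟨v, rfl⟩
    refine ⟨(G.dist v (s 0), Ff v), ?_, ?_⟩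
    · simp only [hP, Finset.coe_product, Set.mem_prod, Finset.mem_coe, Finset.mem_Iic,
        hT, Set.Finite.coe_toFinset]
      exact ⟨hD v (s 0), Set.mem_range_self v⟩
    · funext i
      simpa using key v i.val (by omega)
  calc (Set.range (fun v : V => (fun i => G.dist v (s i)))).ncard
      ≤ (g '' ↑P).ncard := Set.ncard_le_ncard hsub (P.finite_toSet.image g)
    _ ≤ (P : Set (ℕ × Set (Fin ℓ × ℤ))).ncard := Set.ncard_image_le P.finite_toSet
    _ = P.card := Set.ncard_coe_finset P
    _ = (D + 1) * T.card := by
        rw [hP, Finset.card_product, Nat.card_Iic]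
    _ ≤ (D + 1) * N := Nat.mul_le_mul_left _ hTcard
end

section
/- (Sauer–Shelah Lemma) Let X be a finite set and let F be a family of subsets of X with VC dimension at most d. Then |F| ≤ Σ_{k=0}^{d} C(|X|, k); in particular |F| = O(|X|^d). -/
/-- Sauer–Shelah: a family of subsets of a finite set `X` with
VC dimension at most `d` has at most `∑_{k ≤ d} C(|X|, k)` members. -/
theorem stmt_2 {α : Type*} [DecidableEq α] (X : Finset α) (F : Finset (Finset α)) (d : ℕ)
    (hsub : ∀ A ∈ F, A ⊆ X)
    (hVC : ∀ Y : Finset α, Y ⊆ X →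
      (∀ Y' ⊆ Y, ∃ A ∈ F, A ∩ Y = Y') → Y.card ≤ d) :
    F.card ≤ ∑ k ∈ Finset.range (d + 1), X.card.choose k := by
  classical
  have key : ∀ s ∈ F.shatterer, s ⊆ X ∧ s.card ≤ d := by
    intro s hs
    rw [Finset.mem_shatterer] at hs
    obtain ⟨t, ht, hst⟩ := hs.exists_superset
    have hsX : s ⊆ X := hst.trans (hsub t ht)
    refine ⟨hsX, hVC s hsX fun Y' hY' ↦ ?_⟩
    obtain ⟨u, hu, hsu⟩ := hs hY'
    exact ⟨u, hu, by rwa [Finset.inter_comm]⟩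
  calc F.card ≤ F.shatterer.card := Finset.card_le_card_shatterer F
    _ ≤ ((Finset.range (d+1)).biUnion fun k ↦ X.powersetCard k).card := by
        refine Finset.card_le_card fun s hs ↦ Finset.mem_biUnion.2 ⟨s.card, ?_, ?_⟩
        · exact Finset.mem_range.2 (Nat.lt_succ_of_le (key s hs).2)
        · exact Finset.mem_powersetCard.2 ⟨(key s hs).1, rfl⟩
    _ ≤ ∑ k ∈ Finset.range (d + 1), (X.powersetCard k).card := Finset.card_biUnion_le
    _ = ∑ k ∈ Finset.range (d + 1), X.card.choose k := by
        simp [Finset.card_powersetCard]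
end

section
/- Let G be a graph with distance d, and let t_1, t_2, a, b be vertices. Suppose P_1 is a shortest path from t_1 to a and P_2 is a shortest path from t_2 to b, and P_1 and P_2 share a common vertex w. Then d(t_1, b) + d(t_2, a) ≤ d(t_1, a) + d(t_2, b). Consequently, it is impossible to simultaneously have d(t_1, a) ≤ d(t_1, b) + Δ and d(t_2, b) + Δ < d(t_2, a) for any real Δ. -/
/-- Crossing-paths exchange argument. If `w` lies on a shortest
`t₁`–`a` path and on a shortest `t₂`–`b` path, then
`d(t₁,b) + d(t₂,a) ≤ d(t₁,a) + d(t₂,b)`; consequently one cannot have both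
`d(t₁,a) ≤ d(t₁,b) + Δ` and `d(t₂,b) + Δ < d(t₂,a)`. -/
theorem stmt_3 {V : Type*} [PseudoMetricSpace V] (t₁ t₂ a b w : V)
    (h₁ : dist t₁ w + dist w a = dist t₁ a)
    (h₂ : dist t₂ w + dist w b = dist t₂ b) :
    dist t₁ b + dist t₂ a ≤ dist t₁ a + dist t₂ b ∧
    ∀ Δ : ℝ, ¬ (dist t₁ a ≤ dist t₁ b + Δ ∧ dist t₂ b + Δ < dist t₂ a) := by
  have hb : dist t₁ b ≤ dist t₁ w + dist w b := dist_triangle _ _ _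
  have ha : dist t₂ a ≤ dist t₂ w + dist w a := dist_triangle _ _ _
  refine ⟨by linarith, fun Δ ⟨hA, hB⟩ => by linarith⟩
end

section
/- Let Z > 0 and r ≥ 1, and let z ∈ [0, Z)^r have coordinates sampled independently and uniformly from [0, Z). Let B ⊆ ℝ^r be a set of diameter at most ρ (in ℓ∞, i.e., contained in a box of side ρ) with ρ ≤ Z. Consider the grid hash mapping x ↦ ⌊(x + z)/Z⌋ ∈ ℤ^r (coordinate-wise floor). Then the expected number of distinct grid cells that points of B are mapped to is at most (1 + ρ/Z)^r. -/
open MeasureTheory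

lemma floor_int_measurable (Z c : ℝ) : Measurable (fun t : ℝ => (⌊(c + t)/Z⌋ : ℝ)) :=
  measurable_from_top.comp (Int.measurable_floor.comp (by fun_prop))

lemma floor_bounds (Z c : ℝ) (hZ : 0 < Z) {t : ℝ} (ht : t ∈ Set.Ico (0:ℝ) Z) :
    ⌊c/Z⌋ ≤ ⌊(c + t)/Z⌋ ∧ ⌊(c + t)/Z⌋ ≤ ⌊c/Z⌋ + 1 := by
  constructor
  · exact Int.floor_le_floor (by gcongr; linarith [ht.1])
  · have h : (c + t)/Z ≤ c/Z + 1 := by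
      rw [div_le_iff₀ hZ, add_mul, div_mul_cancel₀ _ hZ.ne', one_mul]
      linarith [ht.2]
    calc ⌊(c + t)/Z⌋ ≤ ⌊c/Z + 1⌋ := Int.floor_le_floor h
      _ = ⌊c/Z⌋ + 1 := by rw [Int.floor_add_one]

lemma floor_integrableOn (Z c : ℝ) (hZ : 0 < Z) :
    IntegrableOn (fun t : ℝ => (⌊(c + t)/Z⌋ : ℝ)) (Set.Ico (0:ℝ) Z) := by
  apply Integrable.mono' (g := fun _ => |(⌊c/Z⌋ : ℝ)| + 1)
  · exact integrableOn_const (by rw [Real.volume_Ico]; exact ENNReal.ofReal_ne_top)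
  · exact ((floor_int_measurable Z c).aestronglyMeasurable).restrict
  · filter_upwards [ae_restrict_mem measurableSet_Ico] with t ht
    obtain ⟨h1, h2⟩ := floor_bounds Z c hZ ht
    have h1' : (⌊c/Z⌋ : ℝ) ≤ ⌊(c + t)/Z⌋ := by exact_mod_cast h1
    have h2' : (⌊(c + t)/Z⌋ : ℝ) ≤ ⌊c/Z⌋ + 1 := by exact_mod_cast h2
    rw [Real.norm_eq_abs, abs_le]
    obtain ⟨he, _⟩ | ⟨he, _⟩ := abs_cases ((⌊c/Z⌋ : ℝ)) <;>
      exact ⟨by linarith, by linarith⟩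

lemma floor_integral (Z c : ℝ) (hZ : 0 < Z) :
    ∫ t in Set.Ico (0:ℝ) Z, (⌊(c + t)/Z⌋ : ℝ) = c := by
  set n : ℤ := ⌊c/Z⌋ with hn
  set p : ℝ := Z * (n + 1) - c with hp
  have hfl : (n : ℝ) ≤ c/Z := Int.floor_le _
  have hfu : c/Z < n + 1 := Int.lt_floor_add_one _
  have hcl : Z * n ≤ c := by rw [mul_comm]; calc (n:ℝ) * Z ≤ (c/Z) * Z := by gcongr
                                             _ = c := div_mul_cancel₀ _ hZ.ne'
  have hcu : c < Z * (n + 1) := by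
    calc c = (c/Z) * Z := (div_mul_cancel₀ _ hZ.ne').symm
    _ < (n+1) * Z := by gcongr
    _ = Z * (n+1) := mul_comm _ _
  have hp0 : 0 < p := by simp [hp]; linarith
  have hpZ : p ≤ Z := by simp [hp]; nlinarith
  have hsplit : Set.Ico (0:ℝ) p ∪ Set.Ico p Z = Set.Ico (0:ℝ) Z :=
    Set.Ico_union_Ico_eq_Ico hp0.le hpZ
  have h1 : ∀ t ∈ Set.Ico (0:ℝ) p, (⌊(c + t)/Z⌋ : ℝ) = (n : ℝ) := by
    intro t ht
    congr 1
    rw [Int.floor_eq_iff]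
    constructor
    · calc (n:ℝ) ≤ c/Z := hfl
        _ ≤ (c+t)/Z := by gcongr; · linarith [ht.1]
    · rw [div_lt_iff₀ hZ]; push_cast; nlinarith [ht.2]
  have h2 : ∀ t ∈ Set.Ico p Z, (⌊(c + t)/Z⌋ : ℝ) = ((n : ℝ) + 1) := by
    intro t ht
    have : ⌊(c + t)/Z⌋ = n + 1 := by
      rw [Int.floor_eq_iff]
      constructor
      · rw [le_div_iff₀ hZ]; push_cast; nlinarith [ht.1]
      · rw [div_lt_iff₀ hZ]; push_cast; nlinarith [ht.2]
    rw [this]; push_cast; ring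
  have e1 : ∫ t in Set.Ico (0:ℝ) p, (⌊(c + t)/Z⌋ : ℝ) = n * p := by
    rw [setIntegral_congr_fun measurableSet_Ico h1, setIntegral_const, measureReal_def, Real.volume_Ico,
      ENNReal.toReal_ofReal (by linarith), smul_eq_mul]
    ring
  have e2 : ∫ t in Set.Ico p Z, (⌊(c + t)/Z⌋ : ℝ) = (n + 1) * (Z - p) := by
    rw [setIntegral_congr_fun measurableSet_Ico h2, setIntegral_const, measureReal_def, Real.volume_Ico,
      ENNReal.toReal_ofReal (by linarith), smul_eq_mul]
    ring
  have hint1 : IntegrableOn (fun t : ℝ => (⌊(c + t)/Z⌋ : ℝ)) (Set.Ico (0:ℝ) p) :=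
    (floor_integrableOn Z c hZ).mono_set (Set.Ico_subset_Ico le_rfl hpZ)
  have hint2 : IntegrableOn (fun t : ℝ => (⌊(c + t)/Z⌋ : ℝ)) (Set.Ico p Z) :=
    (floor_integrableOn Z c hZ).mono_set (Set.Ico_subset_Ico hp0.le le_rfl)
  rw [← hsplit, setIntegral_union (Set.Ico_disjoint_Ico_same) measurableSet_Ico
    hint1 hint2, e1, e2]
  simp [hp]; ring

lemma floor_pair (Z a ρ : ℝ) (hZ : 0 < Z) (hρ : 0 ≤ ρ) (hρZ : ρ ≤ Z) (t : ℝ) :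
    ⌊(a + t)/Z⌋ ≤ ⌊(a + ρ + t)/Z⌋ ∧ ⌊(a + ρ + t)/Z⌋ ≤ ⌊(a + t)/Z⌋ + 1 := by
  constructor
  · exact Int.floor_le_floor (by gcongr; linarith)
  · have h : (a + ρ + t)/Z ≤ (a + t)/Z + 1 := by
      rw [div_le_iff₀ hZ, add_mul, div_mul_cancel₀ _ hZ.ne', one_mul]
      linarith
    calc ⌊(a + ρ + t)/Z⌋ ≤ ⌊(a + t)/Z + 1⌋ := Int.floor_le_floor h
      _ = ⌊(a + t)/Z⌋ + 1 := Int.floor_add_one _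

lemma card_pair_eq (Z a ρ : ℝ) (hZ : 0 < Z) (hρ : 0 ≤ ρ) (hρZ : ρ ≤ Z) (t : ℝ) :
    ((({⌊(a + t)/Z⌋, ⌊(a + ρ + t)/Z⌋} : Finset ℤ).card : ℝ))
      = 1 + (⌊(a + ρ + t)/Z⌋ : ℝ) - (⌊(a + t)/Z⌋ : ℝ) := by
  obtain ⟨h1, h2⟩ := floor_pair Z a ρ hZ hρ hρZ t
  rcases eq_or_lt_of_le h1 with he | hlt
  · rw [← he]; simp
  · have hne : ⌊(a + t)/Z⌋ ≠ ⌊(a + ρ + t)/Z⌋ := hlt.ne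
    rw [Finset.card_pair hne]
    have : ⌊(a + ρ + t)/Z⌋ = ⌊(a + t)/Z⌋ + 1 := le_antisymm h2 hlt
    rw [this]; push_cast; ring

lemma card_integral (Z a ρ : ℝ) (hZ : 0 < Z) (hρ : 0 ≤ ρ) (hρZ : ρ ≤ Z) :
    ∫ t in Set.Ico (0:ℝ) Z,
        ((({⌊(a + t)/Z⌋, ⌊(a + ρ + t)/Z⌋} : Finset ℤ).card : ℝ)) = Z + ρ := by
  rw [setIntegral_congr_fun measurableSet_Ico
    (fun t _ => card_pair_eq Z a ρ hZ hρ hρZ t)]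
  have hconst : IntegrableOn (fun _ : ℝ => (1:ℝ)) (Set.Ico (0:ℝ) Z) :=
    integrableOn_const (by rw [Real.volume_Ico]; exact ENNReal.ofReal_ne_top)
  have key : ∫ t in Set.Ico (0:ℝ) Z,
      (1 + (⌊(a + ρ + t)/Z⌋ : ℝ) - (⌊(a + t)/Z⌋ : ℝ)) = Z + ρ := by
    have hf : IntegrableOn (fun t : ℝ => 1 + (⌊(a + ρ + t)/Z⌋ : ℝ)) (Set.Ico (0:ℝ) Z) :=
      hconst.add (floor_integrableOn Z (a+ρ) hZ)
    rw [integral_sub hf (floor_integrableOn Z a hZ),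
      integral_add hconst (floor_integrableOn Z (a+ρ) hZ),
      floor_integral Z (a+ρ) hZ, floor_integral Z a hZ, setIntegral_const,
      measureReal_def, Real.volume_Ico, ENNReal.toReal_ofReal (by linarith : (0:ℝ) ≤ Z - 0), smul_eq_mul]
    ring
  exact key

/-- randomly shifted grid: for a set `B ⊆ ℝ^r` of ℓ∞-diameter at most
`ρ ≤ Z` and a uniformly random shift `z ∈ [0,Z)^r`, the expected number of grid cells
`x ↦ ⌊(x+z)/Z⌋` hit by `B` is at most `(1 + ρ/Z)^r`; equivalently, the integral of
the number of cells over `z ∈ [0,Z)^r` is at most `Z^r (1 + ρ/Z)^r`. -/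
theorem stmt_10 (r : ℕ) (hr : 1 ≤ r) (Z ρ : ℝ) (hZ : 0 < Z) (hρ : 0 ≤ ρ) (hρZ : ρ ≤ Z)
    (B : Set (Fin r → ℝ))
    (hB : ∀ x ∈ B, ∀ y ∈ B, ∀ i, |x i - y i| ≤ ρ) :
    (∫ z in Set.univ.pi (fun _ : Fin r => Set.Ico (0 : ℝ) Z),
        (((fun x : Fin r → ℝ => fun i => ⌊(x i + z i) / Z⌋) '' B).ncard : ℝ))
      ≤ Z ^ r * (1 + ρ / Z) ^ r := by
  have hRHS : (0:ℝ) ≤ Z ^ r * (1 + ρ / Z) ^ r := by positivity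
  rcases B.eq_empty_or_nonempty with hBe | ⟨x₀, hx₀⟩
  · simp [hBe, hRHS]
  -- coordinatewise infimum
  set a : Fin r → ℝ := fun i => sInf ((fun x : Fin r → ℝ => x i) '' B) with ha
  have hbdd : ∀ i, BddBelow ((fun x : Fin r → ℝ => x i) '' B) := by
    intro i
    refine ⟨x₀ i - ρ, ?_⟩
    rintro v ⟨y, hy, rfl⟩
    have := hB x₀ hx₀ y hy i
    rw [abs_le] at this; linarith [this.1]
  have hne : ∀ i, ((fun x : Fin r → ℝ => x i) '' B).Nonempty := fun i => ⟨x₀ i, x₀, hx₀, rfl⟩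
  have ha_le : ∀ x ∈ B, ∀ i, a i ≤ x i := fun x hx i => csInf_le (hbdd i) ⟨x, hx, rfl⟩
  have ha_ub : ∀ x ∈ B, ∀ i, x i ≤ a i + ρ := by
    intro x hx i
    have : x i - ρ ≤ a i := by
      apply le_csInf (hne i)
      rintro v ⟨y, hy, rfl⟩
      have := hB x hx y hy i
      rw [abs_le] at this; linarith [this.1]
    linarith
  -- the coordinate functions
  set g : Fin r → ℝ → ℝ :=
    fun i t => ((({⌊(a i + t)/Z⌋, ⌊(a i + ρ + t)/Z⌋} : Finset ℤ).card : ℝ)) with hg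
  have hg_meas : ∀ i, Measurable (g i) := by
    intro i
    have : g i = fun t => 1 + (⌊(a i + ρ + t)/Z⌋ : ℝ) - (⌊(a i + t)/Z⌋ : ℝ) :=
      funext fun t => card_pair_eq Z (a i) ρ hZ hρ hρZ t
    rw [this]
    exact (measurable_const.add (floor_int_measurable Z (a i + ρ))).sub
      (floor_int_measurable Z (a i))
  have hg_nonneg : ∀ i t, 0 ≤ g i t := fun i t => by positivity
  have hg_le : ∀ i t, g i t ≤ 2 := by
    intro i t
    have : (({⌊(a i + t)/Z⌋, ⌊(a i + ρ + t)/Z⌋} : Finset ℤ).card) ≤ 2 := by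
      apply (Finset.card_insert_le _ _).trans; simp
    simp only [hg]; exact_mod_cast this
  -- pointwise bound
  have hpt : ∀ z : Fin r → ℝ,
      (((fun x : Fin r → ℝ => fun i => ⌊(x i + z i) / Z⌋) '' B).ncard : ℝ)
        ≤ ∏ i, g i (z i) := by
    intro z
    set T : Fin r → Finset ℤ :=
      fun i => ({⌊(a i + z i)/Z⌋, ⌊(a i + ρ + z i)/Z⌋} : Finset ℤ) with hT
    have hsub : (fun x : Fin r → ℝ => fun i => ⌊(x i + z i) / Z⌋) '' B
        ⊆ ↑(Fintype.piFinset T) := by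
      rintro _ ⟨x, hx, rfl⟩
      rw [Finset.mem_coe, Fintype.mem_piFinset]
      intro i
      have h1 : ⌊(a i + z i)/Z⌋ ≤ ⌊(x i + z i)/Z⌋ :=
        Int.floor_le_floor (by gcongr; exact ha_le x hx i)
      have h2 : ⌊(x i + z i)/Z⌋ ≤ ⌊(a i + ρ + z i)/Z⌋ :=
        Int.floor_le_floor (by gcongr; exact ha_ub x hx i)
      have h3 := (floor_pair Z (a i) ρ hZ hρ hρZ (z i)).2
      simp only [hT, Finset.mem_insert, Finset.mem_singleton]
      omega
    have hcard : ((fun x : Fin r → ℝ => fun i => ⌊(x i + z i) / Z⌋) '' B).ncard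
        ≤ (Fintype.piFinset T).card := by
      rw [← Set.ncard_coe_finset]
      exact Set.ncard_le_ncard hsub (Finset.finite_toSet _)
    calc (((fun x : Fin r → ℝ => fun i => ⌊(x i + z i) / Z⌋) '' B).ncard : ℝ)
        ≤ ((Fintype.piFinset T).card : ℝ) := by exact_mod_cast hcard
      _ = ∏ i, g i (z i) := by
          rw [Fintype.card_piFinset]; push_cast; rfl
  -- integrability of the product bound on the box
  have hbox : MeasurableSet (Set.univ.pi (fun _ : Fin r => Set.Ico (0 : ℝ) Z)) :=
    MeasurableSet.univ_pi (fun _ => measurableSet_Ico)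
  have hboxvol : volume (Set.univ.pi (fun _ : Fin r => Set.Ico (0 : ℝ) Z)) < ⊤ := by
    rw [volume_pi_pi]
    exact ENNReal.prod_lt_top (fun i _ => by rw [Real.volume_Ico]; exact ENNReal.ofReal_lt_top)
  have hprod_meas : Measurable (fun z : Fin r → ℝ => ∏ i, g i (z i)) :=
    Finset.measurable_prod _ (fun i _ => (hg_meas i).comp (measurable_pi_apply i))
  have hint : IntegrableOn (fun z : Fin r → ℝ => ∏ i, g i (z i))
      (Set.univ.pi (fun _ : Fin r => Set.Ico (0 : ℝ) Z)) := by
    apply Integrable.mono' (g := fun _ => (2:ℝ)^r)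
    · exact integrableOn_const hboxvol.ne
    · exact hprod_meas.aestronglyMeasurable.restrict
    · refine Filter.Eventually.of_forall (fun z => ?_)
      rw [Real.norm_eq_abs, abs_of_nonneg (Finset.prod_nonneg fun i _ => hg_nonneg i (z i))]
      calc ∏ i, g i (z i) ≤ ∏ _i : Fin r, (2:ℝ) :=
            Finset.prod_le_prod (fun i _ => hg_nonneg i (z i)) (fun i _ => hg_le i (z i))
        _ = 2^r := by simp
  -- main chain
  have step1 : (∫ z in Set.univ.pi (fun _ : Fin r => Set.Ico (0 : ℝ) Z),
        (((fun x : Fin r → ℝ => fun i => ⌊(x i + z i) / Z⌋) '' B).ncard : ℝ))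
      ≤ ∫ z in Set.univ.pi (fun _ : Fin r => Set.Ico (0 : ℝ) Z), ∏ i, g i (z i) := by
    apply integral_mono_of_nonneg
    · exact Filter.Eventually.of_forall (fun z => Nat.cast_nonneg _)
    · exact hint
    · exact Filter.Eventually.of_forall (fun z => hpt z)
  have step2 : (∫ z in Set.univ.pi (fun _ : Fin r => Set.Ico (0 : ℝ) Z), ∏ i, g i (z i))
      = ∏ i : Fin r, ∫ t in Set.Ico (0:ℝ) Z, g i t := by
    rw [← integral_indicator hbox]
    have : (Set.univ.pi (fun _ : Fin r => Set.Ico (0 : ℝ) Z)).indicator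
        (fun z => ∏ i, g i (z i))
        = fun z : Fin r → ℝ => ∏ i, (Set.Ico (0:ℝ) Z).indicator (g i) (z i) := by
      funext z
      by_cases hz : z ∈ Set.univ.pi (fun _ : Fin r => Set.Ico (0 : ℝ) Z)
      · rw [Set.indicator_of_mem hz]
        exact (Finset.prod_congr rfl fun i _ =>
          (Set.indicator_of_mem (hz i (Set.mem_univ i)) _).symm)
      · rw [Set.indicator_of_notMem hz]
        rw [Set.mem_univ_pi] at hz
        push_neg at hz
        obtain ⟨i, hi⟩ := hz
        refine (Finset.prod_eq_zero (Finset.mem_univ i) ?_).symm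
        rw [Set.indicator_of_notMem hi]
    rw [this, MeasureTheory.integral_fintype_prod_volume_eq_prod
      (fun i t => (Set.Ico (0:ℝ) Z).indicator (g i) t)]
    exact Finset.prod_congr rfl fun i _ => (integral_indicator measurableSet_Ico)
  have step3 : (∏ i : Fin r, ∫ t in Set.Ico (0:ℝ) Z, g i t) = (Z + ρ)^r := by
    rw [Finset.prod_congr rfl (fun i _ => card_integral Z (a i) ρ hZ hρ hρZ)]
    simp
  have hZρ : Z * (1 + ρ / Z) = Z + ρ := by field_simp
  calc _ ≤ ∫ z in Set.univ.pi (fun _ : Fin r => Set.Ico (0 : ℝ) Z), ∏ i, g i (z i) := step1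
    _ = (Z + ρ)^r := by rw [step2, step3]
    _ = Z ^ r * (1 + ρ / Z) ^ r := by rw [← mul_pow, hZρ]
end

section
/- Let G be a graph, let X be a vertex set with separator S_X, children X_1, ..., X_k covering X such that every edge of G[X] is in some G[X_j], and such that every path between different children passes through S_X. For a vertex v and the complete auxiliary graph Ĝ(v) on vertex set {v} ∪ S_X with edge weights w(x, y) = min_j d̂_{G[X_j]}(x, y) (where d̂ is d_{G[X_j]} if both endpoints lie in X_j and ∞ otherwise), it holds that d_{Ĝ(v)}(v, s) = d_{G[X]}(v, s) for every s ∈ S_X. -/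
open SimpleGraph

private lemma enat_add_iInf {ι : Sort*} (a : ℕ∞) (f : ι → ℕ∞) :
    a + ⨅ i, f i = ⨅ i, a + f i := by
  refine le_antisymm (le_iInf fun i => add_le_add_right (iInf_le f i) a) ?_
  cases isEmpty_or_nonempty ι with
  | inl h => simp [iInf_of_empty]
  | inr h =>
    obtain ⟨i, hi⟩ := csInf_mem (Set.range_nonempty f)
    exact iInf_le_of_le i (by rw [hi, ← sInf_range])

noncomputable def auxW {V : Type*} (H : SimpleGraph V) {k : ℕ} (Xc : Fin k → Set V)
    (x y : V) : ℕ∞ :=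
  ⨅ (j : Fin k) (hx : x ∈ Xc j) (hy : y ∈ Xc j),
    (H.induce (Xc j)).edist ⟨x, hx⟩ ⟨y, hy⟩

noncomputable def auxF {V : Type*} (H : SimpleGraph V) {k : ℕ} (Xc : Fin k → Set V)
    (S : Set V) (v s : V) : ℕ∞ :=
  ⨅ (m : ℕ) (x : Fin (m + 1) → V) (_ : x 0 = v) (_ : x (Fin.last m) = s)
      (_ : ∀ i : Fin (m + 1), i ≠ 0 → x i ∈ S),
    ∑ i : Fin m, auxW H Xc (x i.castSucc) (x i.succ)

lemma edist_le_induce {V : Type*} (H : SimpleGraph V) (s : Set V) (a b : s) :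
    H.edist a b ≤ (H.induce s).edist a b := by
  rcases eq_or_ne ((H.induce s).edist a b) ⊤ with h | h
  · simp [h]
  · obtain ⟨p, hp⟩ := exists_walk_of_edist_ne_top h
    rw [← hp]
    have := SimpleGraph.edist_le (p.map (SimpleGraph.Embedding.induce s).toHom)
    rw [Walk.length_map] at this
    simpa using this

lemma edist_chain {V : Type*} (H : SimpleGraph V) :
    ∀ (m : ℕ) (x : Fin (m + 1) → V),
      H.edist (x 0) (x (Fin.last m)) ≤ ∑ i : Fin m, H.edist (x i.castSucc) (x i.succ)
  | 0, x => by simp [Fin.last]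
  | (m + 1), x => by
    rw [Fin.sum_univ_succ]
    refine le_trans (H.edist_triangle (v := x 1)) (add_le_add ?_ ?_)
    · simp
    · have h2 := edist_chain H m (x ∘ Fin.succ)
      simp only [Function.comp_apply, ← Fin.succ_castSucc, Fin.succ_last] at h2
      exact h2

lemma edist_le_auxF {V : Type*} (H : SimpleGraph V) {k : ℕ} (Xc : Fin k → Set V)
    (S : Set V) (v s : V) : H.edist v s ≤ auxF H Xc S v s := by
  refine le_iInf fun m => le_iInf fun x => le_iInf fun h0 => le_iInf fun hl =>
    le_iInf fun _ => ?_
  calc H.edist v s = H.edist (x 0) (x (Fin.last m)) := by rw [h0, hl]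
    _ ≤ ∑ i : Fin m, H.edist (x i.castSucc) (x i.succ) := edist_chain H m x
    _ ≤ ∑ i : Fin m, auxW H Xc (x i.castSucc) (x i.succ) := by
        refine Finset.sum_le_sum fun i _ => ?_
        exact le_iInf fun j => le_iInf fun hx => le_iInf fun hy =>
          edist_le_induce H (Xc j) ⟨_, hx⟩ ⟨_, hy⟩

lemma auxF_self {V : Type*} (H : SimpleGraph V) {k : ℕ} (Xc : Fin k → Set V)
    (S : Set V) (s : V) : auxF H Xc S s s ≤ 0 := by
  refine iInf_le_of_le 0 (iInf_le_of_le (fun _ => s) (iInf_le_of_le rfl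
    (iInf_le_of_le rfl (iInf_le_of_le (fun i hi => absurd (Fin.fin_one_eq_zero i) hi) ?_))))
  simp

lemma auxF_prepend {V : Type*} (H : SimpleGraph V) {k : ℕ} (Xc : Fin k → Set V)
    (S : Set V) {a t s : V} (ht : t ∈ S) :
    auxF H Xc S a s ≤ auxW H Xc a t + auxF H Xc S t s := by
  have key : ∀ (m : ℕ) (x : Fin (m + 1) → V), x 0 = t → x (Fin.last m) = s →
      (∀ i : Fin (m + 1), i ≠ 0 → x i ∈ S) →
      auxF H Xc S a s ≤ auxW H Xc a t + ∑ i : Fin m, auxW H Xc (x i.castSucc) (x i.succ) := by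
    intro m x h0 hl hS
    set y : Fin (m + 2) → V := Fin.cases a x with hy
    have hy0 : y 0 = a := rfl
    have hylast : y (Fin.last (m + 1)) = s := by
      rw [← Fin.succ_last]
      simp only [hy, Fin.cases_succ]
      exact hl
    have hyS : ∀ i : Fin (m + 2), i ≠ 0 → y i ∈ S := by
      intro i hi
      induction i using Fin.cases with
      | zero => exact absurd rfl hi
      | succ j =>
        simp only [hy, Fin.cases_succ]
        rcases eq_or_ne j 0 with rfl | hj
        · rw [h0]; exact ht
        · exact hS j hj
    have hsum : ∑ i : Fin (m + 1), auxW H Xc (y i.castSucc) (y i.succ)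
        = auxW H Xc a t + ∑ i : Fin m, auxW H Xc (x i.castSucc) (x i.succ) := by
      rw [Fin.sum_univ_succ]
      have h1 : auxW H Xc (y (0 : Fin (m + 1)).castSucc) (y (0 : Fin (m + 1)).succ)
          = auxW H Xc a t := by
        simp only [hy, Fin.castSucc_zero, ← Fin.succ_zero_eq_one, Fin.cases_succ,
          Fin.cases_zero, h0]
      rw [h1]
      congr 1
    refine le_trans (iInf_le_of_le (m + 1) (iInf_le_of_le y (iInf_le_of_le hy0
      (iInf_le_of_le hylast (iInf_le_of_le hyS le_rfl))))) (le_of_eq hsum)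
  conv_rhs => rw [auxF]
  rw [enat_add_iInf]
  refine le_iInf fun m => ?_
  rw [enat_add_iInf]
  refine le_iInf fun x => ?_
  rw [enat_add_iInf]
  refine le_iInf fun h0 => ?_
  rw [enat_add_iInf]
  refine le_iInf fun hl => ?_
  rw [enat_add_iInf]
  refine le_iInf fun hS => ?_
  exact key m x h0 hl hS

lemma auxW_le {V : Type*} (H : SimpleGraph V) {k : ℕ} (Xc : Fin k → Set V)
    {x y : V} (j : Fin k) (hx : x ∈ Xc j) (hy : y ∈ Xc j) :
    auxW H Xc x y ≤ (H.induce (Xc j)).edist ⟨x, hx⟩ ⟨y, hy⟩ :=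
  iInf_le_of_le j (iInf_le_of_le hx (iInf_le _ hy))

lemma induce_edist_adj {V : Type*} (H : SimpleGraph V) (s : Set V) {x y : V}
    (hx : x ∈ s) (hy : y ∈ s) (h : H.Adj x y) :
    (H.induce s).edist ⟨x, hx⟩ ⟨y, hy⟩ ≤ 1 := by
  have hadj : (H.induce s).Adj ⟨x, hx⟩ ⟨y, hy⟩ := h
  simpa using SimpleGraph.edist_le hadj.toWalk

lemma auxF_le_of_walk {V : Type*} (H : SimpleGraph V) {k : ℕ} (Xc : Fin k → Set V)
    (S : Set V)
    (hcover : ∀ a b : V, H.Adj a b → ∃ j, a ∈ Xc j ∧ b ∈ Xc j)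
    (hsep : ∀ (a b : V) (ja jb : Fin k), ja ≠ jb → a ∈ Xc ja → b ∈ Xc jb →
      ∀ p : H.Walk a b, ∃ s ∈ S, s ∈ p.support) :
    ∀ {u s : V} (r : H.Walk u s), s ∈ S → ∀ {a : V} (j : Fin k) (ha : a ∈ Xc j)
      (hu : u ∈ Xc j),
      auxF H Xc S a s ≤ (H.induce (Xc j)).edist ⟨a, ha⟩ ⟨u, hu⟩ + r.length := by
  intro u s r
  induction r with
  | @nil u =>
    intro hs a j ha hu
    calc auxF H Xc S a u ≤ auxW H Xc a u + auxF H Xc S u u := auxF_prepend H Xc S hs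
      _ ≤ auxW H Xc a u + 0 := add_le_add_right (auxF_self H Xc S u) _
      _ = auxW H Xc a u := add_zero _
      _ ≤ (H.induce (Xc j)).edist ⟨a, ha⟩ ⟨u, hu⟩ := auxW_le H Xc j ha hu
      _ ≤ _ := by simp
  | @cons u c s huc r ih =>
    intro hs a j ha hu
    by_cases hcj : c ∈ Xc j
    · calc auxF H Xc S a s ≤ (H.induce (Xc j)).edist ⟨a, ha⟩ ⟨c, hcj⟩ + r.length :=
            ih hs j ha hcj
        _ ≤ ((H.induce (Xc j)).edist ⟨a, ha⟩ ⟨u, hu⟩ + 1) + r.length := by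
            gcongr
            exact le_trans ((H.induce (Xc j)).edist_triangle (v := ⟨u, hu⟩))
              (add_le_add_right (induce_edist_adj H (Xc j) hu hcj huc) _)
        _ = (H.induce (Xc j)).edist ⟨a, ha⟩ ⟨u, hu⟩ + (Walk.cons huc r).length := by
            rw [Walk.length_cons]
            push_cast
            ring
    · obtain ⟨j', hu', hc'⟩ := hcover u c huc
      have hjj : j ≠ j' := fun h => hcj (h ▸ hc')
      have huS : u ∈ S := by
        obtain ⟨z, hzS, hz⟩ := hsep u u j j' hjj hu hu' Walk.nil
        simp only [Walk.support_nil, List.mem_singleton] at hz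
        rwa [← hz]
      calc auxF H Xc S a s ≤ auxW H Xc a u + auxF H Xc S u s := auxF_prepend H Xc S huS
        _ ≤ auxW H Xc a u + ((H.induce (Xc j')).edist ⟨u, hu'⟩ ⟨c, hc'⟩ + r.length) :=
            add_le_add_right (ih hs j' hu' hc') _
        _ ≤ (H.induce (Xc j)).edist ⟨a, ha⟩ ⟨u, hu⟩ + (1 + r.length) := by
            gcongr
            · exact auxW_le H Xc j ha hu
            · exact induce_edist_adj H (Xc j') hu' hc' huc
        _ = (H.induce (Xc j)).edist ⟨a, ha⟩ ⟨u, hu⟩ + (Walk.cons huc r).length := by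
            rw [Walk.length_cons]
            push_cast
            ring

lemma auxF_le_edist {V : Type*} (H : SimpleGraph V) {k : ℕ} (Xc : Fin k → Set V)
    (S : Set V)
    (hcover : ∀ a b : V, H.Adj a b → ∃ j, a ∈ Xc j ∧ b ∈ Xc j)
    (hsep : ∀ (a b : V) (ja jb : Fin k), ja ≠ jb → a ∈ Xc ja → b ∈ Xc jb →
      ∀ p : H.Walk a b, ∃ s ∈ S, s ∈ p.support)
    (v s : V) (hs : s ∈ S) : auxF H Xc S v s ≤ H.edist v s := by
  rcases eq_or_ne (H.edist v s) ⊤ with h | h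
  · simp [h]
  obtain ⟨p, hp⟩ := exists_walk_of_edist_ne_top h
  rw [← hp]
  cases p with
  | nil => simpa using auxF_self H Xc S v
  | @cons v b s hadj q =>
    obtain ⟨j, hv, hb⟩ := hcover _ _ hadj
    calc auxF H Xc S v s ≤ (H.induce (Xc j)).edist ⟨v, hv⟩ ⟨b, hb⟩ + q.length :=
          auxF_le_of_walk H Xc S hcover hsep q hs j hv hb
      _ ≤ 1 + q.length := add_le_add_left (induce_edist_adj H (Xc j) hv hb hadj) _
      _ = (Walk.cons hadj q).length := by
          rw [Walk.length_cons]
          push_cast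
          ring

/-- Correctness of the auxiliary graph `Ĝ(v)` on `{v} ∪ S`: with edge
weights `w(x,y) = min_j d_{H[X_j]}(x,y)` (∞ if `x, y` are not both in some child `X_j`),
the shortest `v`–`s` distance through intermediate vertices of `S` equals `d_{H}(v,s)`,
provided every edge of `H` lies in some child and every walk between different children
passes through `S`. Distances are extended distances in `ℕ∞`. -/
theorem stmt_16 {V : Type*} (H : SimpleGraph V) {k : ℕ} (Xc : Fin k → Set V)
    (S : Set V)
    (hcover : ∀ a b : V, H.Adj a b → ∃ j, a ∈ Xc j ∧ b ∈ Xc j)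
    (hsep : ∀ (a b : V) (ja jb : Fin k), ja ≠ jb → a ∈ Xc ja → b ∈ Xc jb →
      ∀ p : H.Walk a b, ∃ s ∈ S, s ∈ p.support)
    (v s : V) (hs : s ∈ S) :
    (⨅ (m : ℕ) (x : Fin (m + 1) → V) (_ : x 0 = v) (_ : x (Fin.last m) = s)
        (_ : ∀ i : Fin (m + 1), i ≠ 0 → x i ∈ S),
      ∑ i : Fin m,
        ⨅ (j : Fin k) (hx : x i.castSucc ∈ Xc j) (hy : x i.succ ∈ Xc j),
          (H.induce (Xc j)).edist ⟨x i.castSucc, hx⟩ ⟨x i.succ, hy⟩)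
      = H.edist v s := by
  have : auxF H Xc S v s = H.edist v s :=
    le_antisymm (auxF_le_edist H Xc S hcover hsep v s hs) (edist_le_auxF H Xc S v s)
  exact this
end

section
/- Let G be a weighted graph with metric d, let u, v be vertices, and let S be a set of vertices such that every u–v shortest path intersects S. Let Q ⊆ S be a set of portals such that every vertex s ∈ S is within weighted distance ε'·D̃ along the separator structure of some portal in Q, in the sense that for every s ∈ S there exists q ∈ Q with d(s, q) ≤ ε'·D̃. Then min_{s,t ∈ Q}(d(u,s) + d(s,t) + d(t,v)) ≤ d(u,v) + 4·ε'·D̃. -/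
/-- If every `u`–`v` shortest path crosses the separator `S`, i.e.
`d(u,v) = min_{s ∈ S}(d(u,s) + d(s,v))`, and `Q ⊆ S` is an `ε'·D̃`-net of `S`, then
`min_{s,t ∈ Q}(d(u,s) + d(s,t) + d(t,v)) ≤ d(u,v) + 4·ε'·D̃`. -/
theorem stmt_18 {V : Type*} [PseudoMetricSpace V] (u v : V)
    (S Q : Finset V) (hS : S.Nonempty) (hQ : Q.Nonempty) (hQS : Q ⊆ S)
    (ε' Dt : ℝ) (hε' : 0 ≤ ε') (hD : 0 ≤ Dt)
    (hsep : dist u v = S.inf' hS (fun s => dist u s + dist s v))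
    (hnet : ∀ s ∈ S, ∃ q ∈ Q, dist s q ≤ ε' * Dt) :
    (Q ×ˢ Q).inf' (hQ.product hQ)
        (fun st => dist u st.1 + dist st.1 st.2 + dist st.2 v)
      ≤ dist u v + 4 * (ε' * Dt) := by
  obtain ⟨s, hsS, hs⟩ := Finset.exists_mem_eq_inf' hS (fun s => dist u s + dist s v)
  obtain ⟨q, hqQ, hq⟩ := hnet s hsS
  have hmem : (q, q) ∈ Q ×ˢ Q := Finset.mem_product.2 ⟨hqQ, hqQ⟩
  have h1 : dist u q ≤ dist u s + ε' * Dt :=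
    le_trans (dist_triangle u s q) (by linarith)
  have h2 : dist q v ≤ ε' * Dt + dist s v := by
    have := dist_triangle q s v
    have hqs : dist q s ≤ ε' * Dt := by rwa [dist_comm]
    linarith
  calc (Q ×ˢ Q).inf' (hQ.product hQ)
        (fun st => dist u st.1 + dist st.1 st.2 + dist st.2 v)
      ≤ dist u q + dist q q + dist q v := Finset.inf'_le _ hmem
    _ ≤ (dist u s + ε' * Dt) + 0 + (ε' * Dt + dist s v) := by
        simp [dist_self]; linarith
    _ ≤ dist u v + 4 * (ε' * Dt) := by
        have hd : dist u s + dist s v = dist u v := by rw [hsep, hs]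
        have : 0 ≤ ε' * Dt := mul_nonneg hε' hD
        linarith
end
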